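/- (Proposition 1, individual-robot sufficient condition for local-to-global safety.) Suppose that for every robot i ∈ ι there is a real number s_i with s_i ≤ −2 ∫_A ρ_{𝒩(i)} · ρ̇_i dμ (a lower bound on robot i's achieved self safety rate ḣ_i^self) such that the individual bound 2 ∫_A ρ̇_i · ρ_{𝒩̄(i)} dμ ≤ β·( ε/N − ∫_A ρ_i · ρ dμ ) + s_i holds. Then the global CBF condition holds: −2 ∑_{i∈ι} ∫_A ρ · ρ̇_i dμ ≥ −β·( ε − ∫_A ρ² dμ ), i.e. ḣ ≥ −β·h. -/

import Mathlib

open MeasureTheory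

/-! Splitting `ρ = ρ_{𝒩(i)} + ρ_{𝒩̄(i)}` in robot `i`'s share `−2∫_A ρ·ρ̇ᵢ` of `ḣ` and combining
the two hypotheses gives `β(∫_A ρᵢ·ρ − ε/N) ≤ −2∫_A ρ·ρ̇ᵢ`. Summing over the `N` robots, the
`ε/N` add up to `ε` and the `∫_A ρᵢ·ρ` add up to `∫_A ρ²`, which is `ḣ ≥ −βh`. -/

section

variable {Ω ι : Type*} [MeasurableSpace Ω] {μ : Measure Ω} {f : ι → Ω → ℝ}

theorem integral_sum_mul_eq_add_compl [Fintype ι] [DecidableEq ι] (hf : ∀ j, MemLp (f j) 2 μ)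
    {g : Ω → ℝ} (hg : MemLp g 2 μ) (t : Finset ι) :
    ∫ x, (∑ j, f j x) * g x ∂μ
      = ∫ x, (∑ j ∈ t, f j x) * g x ∂μ + ∫ x, (∑ j ∈ tᶜ, f j x) * g x ∂μ := by
  have hsum : ∀ u : Finset ι, Integrable (fun x ↦ (∑ j ∈ u, f j x) * g x) μ := fun u ↦
    (memLp_finsetSum u fun j _ ↦ hf j).integrable_mul hg
  rw [← integral_add (hsum t) (hsum tᶜ)]
  simp only [← add_mul, Finset.sum_add_sum_compl]

theorem integral_sq_sum_eq_sum_integral_mul [Fintype ι] (hf : ∀ j, MemLp (f j) 2 μ) :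
    ∫ x, (∑ j, f j x) ^ 2 ∂μ = ∑ i, ∫ x, f i x * ∑ j, f j x ∂μ := by
  have htotal : MemLp (fun x ↦ ∑ j, f j x) 2 μ := memLp_finsetSum _ fun j _ ↦ hf j
  have hprod : ∀ i, Integrable (fun x ↦ f i x * ∑ j, f j x) μ := fun i ↦
    (hf i).integrable_mul htotal
  rw [← integral_finsetSum _ fun i _ ↦ hprod i]
  simp only [← Finset.sum_mul, sq]

end

theorem Finset.sum_sub_div_card {ι : Type*} [Fintype ι] [Nonempty ι] (c : ι → ℝ) (ε : ℝ) :
    ∑ i, (c i - ε / Fintype.card ι) = ∑ i, c i - ε := by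
  rw [Finset.sum_sub_distrib, Finset.sum_const, Finset.card_univ, nsmul_eq_mul,
    mul_div_cancel₀ _ (Nat.cast_ne_zero.2 Fintype.card_ne_zero)]

theorem individual_bound_implies_global_cbf_general
    {Ω : Type*} [MeasurableSpace Ω] (μ : Measure Ω) (A : Set Ω)
    {ι : Type*} [Fintype ι] [DecidableEq ι] [Nonempty ι]
    (ρ ρdot : ι → Ω → ℝ)
    (hρ : ∀ i, MemLp (ρ i) 2 (μ.restrict A))
    (hρdot : ∀ i, MemLp (ρdot i) 2 (μ.restrict A))
    (𝒩 : ι → Finset ι)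
    (ε β : ℝ) (s : ι → ℝ)
    (hs : ∀ i, s i ≤ -2 * ∫ x in A, (∑ j ∈ 𝒩 i, ρ j x) * ρdot i x ∂μ)
    (hbound : ∀ i,
      2 * ∫ x in A, ρdot i x * (∑ j ∈ (𝒩 i)ᶜ, ρ j x) ∂μ
        ≤ β * (ε / (Fintype.card ι : ℝ)
            - ∫ x in A, ρ i x * (∑ j, ρ j x) ∂μ) + s i) :
    -2 * ∑ i, ∫ x in A, (∑ j, ρ j x) * ρdot i x ∂μ
      ≥ -β * (ε - ∫ x in A, (∑ j, ρ j x) ^ 2 ∂μ) := by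
  have hrobot : ∀ i, β * (∫ x in A, ρ i x * (∑ j, ρ j x) ∂μ - ε / Fintype.card ι)
      ≤ -2 * ∫ x in A, (∑ j, ρ j x) * ρdot i x ∂μ := by
    intro i
    have hbound_i := hbound i
    simp_rw [mul_comm (ρdot i _)] at hbound_i
    rw [integral_sum_mul_eq_add_compl hρ (hρdot i) (𝒩 i)]
    linarith [hs i]
  rw [integral_sq_sum_eq_sum_integral_mul hρ, ge_iff_le, Finset.mul_sum]
  calc -β * (ε - ∑ i, ∫ x in A, ρ i x * (∑ j, ρ j x) ∂μ)
      = β * ∑ i, (∫ x in A, ρ i x * (∑ j, ρ j x) ∂μ - ε / Fintype.card ι) := by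
        rw [Finset.sum_sub_div_card]; ring
    _ = ∑ i, β * (∫ x in A, ρ i x * (∑ j, ρ j x) ∂μ - ε / Fintype.card ι) := Finset.mul_sum ..
    _ ≤ ∑ i, -2 * ∫ x in A, (∑ j, ρ j x) * ρdot i x ∂μ :=
        Finset.sum_le_sum fun i _ ↦ hrobot i

/-- Proposition 1 (individual-robot sufficient condition for local-to-global
safety): if every robot `i` admits a lower bound `s i` on its achieved self
safety rate `ḣᵢ^self` such that the individual bound
`2∫_A ρ̇ᵢ·ρ_{𝒩̄(i)} ≤ β(ε/N − ∫_A ρᵢ·ρ) + s i` holds, then the global CBF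
condition `ḣ ≥ −β·h` holds. -/
theorem individual_bound_implies_global_cbf
    {Ω : Type*} [MeasurableSpace Ω] (μ : Measure Ω) (A : Set Ω)
    (hA : MeasurableSet A)
    {ι : Type*} [Fintype ι] [DecidableEq ι] [Nonempty ι]
    (ρ ρdot : ι → Ω → ℝ)
    (hρ : ∀ i, MemLp (ρ i) 2 (μ.restrict A))
    (hρdot : ∀ i, MemLp (ρdot i) 2 (μ.restrict A))
    (𝒩 : ι → Finset ι) (hself : ∀ i, i ∈ 𝒩 i)
    (ε β : ℝ) (hβ : 0 < β) (s : ι → ℝ)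
    (hs : ∀ i, s i ≤ -2 * ∫ x in A, (∑ j ∈ 𝒩 i, ρ j x) * ρdot i x ∂μ)
    (hbound : ∀ i,
      2 * ∫ x in A, ρdot i x * (∑ j ∈ (𝒩 i)ᶜ, ρ j x) ∂μ
        ≤ β * (ε / (Fintype.card ι : ℝ)
            - ∫ x in A, ρ i x * (∑ j, ρ j x) ∂μ) + s i) :
    -2 * ∑ i, ∫ x in A, (∑ j, ρ j x) * ρdot i x ∂μ
      ≥ -β * (ε - ∫ x in A, (∑ j, ρ j x) ^ 2 ∂μ) :=
  individual_bound_implies_global_cbf_general μ A ρ ρdot hρ hρdot 𝒩 ε β s hs hbound
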